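/- arXiv:2311.18766 — 2 statements merged into one kernel-verified Lean document; each statement's English description precedes it below -/
import Mathlib

section
/- Let F be a finite field (or any finite type) and p ≥ 2 a natural number. A sequence a : ℕ → F is p-automatic (there exist a finite type σ, δ : σ → Fin p → σ, s₀ : σ, and o : σ → F with a(n) = o(List.foldl δ s₀ (Nat.digits p n)) for all n) if and only if its p-kernel, the set of functions { n ↦ a(p^k · n + r) : k ∈ ℕ, 0 ≤ r < p^k } ⊆ (ℕ → F), is finite. -/
/-!
Reading the base-`p` digits of `p ^ k * n + r` means reading those of `r`, padded with zeros
to length `k`, and then those of `n`. So for an automaton every kernel sequence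
`n ↦ a (p ^ k * n + r)` is determined by the state reached after the padded digits of `r`
together with its value at `0`, which leaves finitely many possibilities. Conversely, the kernel
is closed under the digit shifts `b ↦ (n ↦ b (p * n + d))`, and these shifts, started at `a`
and read off at `0`, form an automaton on the finite kernel that computes `a`.
-/

open List

theorem Nat.digits_pow_mul_add {b k n r : ℕ} (hb : 1 < b) (hn : n ≠ 0) (hr : r < b ^ k) :
    b.digits (b ^ k * n + r) =
      b.digits r ++ replicate (k - (b.digits r).length) 0 ++ b.digits n := by
  rw [Nat.digits_append_zeroes_append_digits hb (Nat.pos_of_ne_zero hn),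
    Nat.add_sub_cancel' ((Nat.digits_length_le_iff hb r).2 hr), add_comm]

theorem exists_fin_automaton {σ α F : Type*} [Finite σ] (δ : σ → α → σ) (s₀ : σ) (o : σ → F) :
    ∃ (τ : Type) (_ : Fintype τ) (δ' : τ → α → τ) (t₀ : τ) (o' : τ → F),
      ∀ L, o' (foldl δ' t₀ L) = o (foldl δ s₀ L) := by
  obtain ⟨m, ⟨e⟩⟩ := Finite.exists_equiv_fin σ
  refine ⟨Fin m, inferInstance, fun t d => e (δ (e.symm t) d), e s₀, o ∘ e.symm, fun L => ?_⟩
  rw [foldl_hom e (g₁ := δ) fun s d => by simp, Function.comp_apply, Equiv.symm_apply_apply]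

def pKernel (p : ℕ) {F : Type*} (a : ℕ → F) : Set (ℕ → F) :=
  {b | ∃ k r : ℕ, r < p ^ k ∧ b = fun n => a (p ^ k * n + r)}

section Kernel

variable {p : ℕ} {F : Type*}

theorem pKernel_subset_range_of_foldl_digits {σ α : Type*} (hp : 1 < p) (c : ℕ → α)
    (δ : σ → α → σ) (s₀ : σ) (o : σ → F) {a : ℕ → F}
    (ha : ∀ n, a n = o (foldl δ s₀ ((p.digits n).map c))) :
    pKernel p a ⊆ Set.range fun (sx : σ × F) n =>
      if n = 0 then sx.2 else o (foldl δ sx.1 ((p.digits n).map c)) := by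
  rintro _ ⟨k, r, hr, rfl⟩
  refine ⟨(foldl δ s₀ ((p.digits r ++ replicate (k - (p.digits r).length) 0).map c), a r), ?_⟩
  funext n
  rcases eq_or_ne n 0 with rfl | hn
  · simp
  · simp [hn, ha (p ^ k * n + r), Nat.digits_pow_mul_add hp hn hr, foldl_append]

theorem pKernel_finite_of_foldl_digits {σ α : Type*} [Finite σ] [Finite F] (hp : 1 < p)
    (c : ℕ → α) (δ : σ → α → σ) (s₀ : σ) (o : σ → F) {a : ℕ → F}
    (ha : ∀ n, a n = o (foldl δ s₀ ((p.digits n).map c))) :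
    (pKernel p a).Finite :=
  (Set.finite_range _).subset (pKernel_subset_range_of_foldl_digits hp c δ s₀ o ha)

def digitShift (p : ℕ) (b : ℕ → F) (d : Fin p) : ℕ → F :=
  fun n => b (p * n + d)

theorem foldl_digitShift_apply (b : ℕ → F) (L : List (Fin p)) (n : ℕ) :
    foldl (digitShift p) b L n = b (Nat.ofDigits p (L.map Fin.val) + p ^ L.length * n) := by
  induction L generalizing b with
  | nil => simp
  | cons d L ih =>
    simp only [foldl_cons, ih, digitShift, map_cons, Nat.ofDigits_cons, length_cons]
    ring_nf

theorem self_mem_pKernel (a : ℕ → F) : a ∈ pKernel p a :=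
  ⟨0, 0, Nat.one_pos, by simp⟩

theorem digitShift_mem_pKernel {a b : ℕ → F} (hb : b ∈ pKernel p a) (d : Fin p) :
    digitShift p b d ∈ pKernel p a := by
  obtain ⟨k, r, hr, rfl⟩ := hb
  refine ⟨k + 1, p ^ k * d + r, ?_, ?_⟩
  · calc p ^ k * d + r < p ^ k * (d + 1) := by rw [mul_add_one]; omega
      _ ≤ p ^ (k + 1) := by rw [pow_succ]; exact Nat.mul_le_mul_left _ d.isLt
  · funext n
    simp only [digitShift, pow_succ]
    ring_nf

def pKernelStep (a : ℕ → F) (b : pKernel p a) (d : Fin p) : pKernel p a :=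
  ⟨digitShift p b d, digitShift_mem_pKernel b.2 d⟩

theorem foldl_pKernelStep_digits (hp : 1 < p) (c : ℕ → Fin p) (hc : ∀ d < p, (c d : ℕ) = d)
    (a : ℕ → F) (n : ℕ) :
    a n = (foldl (pKernelStep a) ⟨a, self_mem_pKernel a⟩ ((p.digits n).map c)).1 0 := by
  have hdigits : ((p.digits n).map c).map Fin.val = p.digits n := by
    rw [map_map]
    exact (map_congr_left fun d hd => hc d (Nat.digits_lt_base hp hd)).trans (map_id _)
  rw [← foldl_hom Subtype.val (g₂ := digitShift p) fun _ _ => rfl, foldl_digitShift_apply, hdigits,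
    Nat.ofDigits_digits, mul_zero, add_zero]

end Kernel

/-- A sequence with values in a finite type is `p`-automatic if and only if
its `p`-kernel is finite. -/
theorem automatic_iff_pKernel_finite (p : ℕ) (hp : 2 ≤ p) (F : Type*) [Fintype F]
    (a : ℕ → F) :
    (∃ (σ : Type) (_ : Fintype σ) (δ : σ → Fin p → σ) (s₀ : σ) (o : σ → F),
        ∀ n : ℕ,
          a n = o (List.foldl δ s₀
            ((Nat.digits p n).map (fun d => (⟨d % p, Nat.mod_lt d (by omega)⟩ : Fin p))))) ↔
      Set.Finite {b : ℕ → F | ∃ k r : ℕ, r < p ^ k ∧ b = fun n => a (p ^ k * n + r)} := by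
  constructor
  · rintro ⟨σ, _, δ, s₀, o, ha⟩
    exact pKernel_finite_of_foldl_digits hp _ δ s₀ o ha
  · intro hfin
    have : Finite (pKernel p a) := hfin.to_subtype
    obtain ⟨σ, _, δ, s₀, o, hσ⟩ :=
      exists_fin_automaton (pKernelStep (p := p) a) ⟨a, self_mem_pKernel a⟩ fun b => b.1 0
    refine ⟨σ, inferInstance, δ, s₀, o, fun n => ?_⟩
    rw [hσ]
    exact foldl_pKernelStep_digits hp _ (fun d hd => Nat.mod_eq_of_lt hd) a n
end

section
/- Let F be a finite field of characteristic p and let P ∈ F[[X]] be algebraic over F[X]. Then there exists a finite-dimensional F-linear subspace V of F[[X]] such that P ∈ V and V is stable under all weeding operators: for every 0 ≤ r < p and every Q ∈ V, the series Λ_r Q (whose n-th coefficient is coeff (p·n + r) Q) lies in V. -/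
/-!
Let `q = |F| = p ^ s`. On `F⟦X⟧` the map `h ↦ h ^ q` is the substitution `X ↦ X ^ q`, so the
`q`-weeding operators satisfy `Λᵣ (g * h ^ q) = Λᵣ g * h`. Algebraicity of `P` yields an Ore
relation `D * u = ∑ Cᵢ * u ^ q ^ (i + 1)` with `D ≠ 0` for some `u = P ^ q ^ k`. The series `Q`
for which `D * Q` is a combination of the `X ^ j * u ^ q ^ i` (`j ≤ N`, `i ≤ d`) form a
finite-dimensional space; since `D * Λᵣ Q = Λᵣ (D ^ (q - 1) * (D * Q))`, the Ore relation (needed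
for `i = 0`) shows that it is stable under the `Λᵣ` once `N` bounds the degrees of `D` and the
`Cᵢ`. It contains `u`, hence `P = Λ₀ᵏ u`. Finally, `p`-weeding operators compose to
`p ^ k`-weeding operators, so adding the images of this space under the `p ^ k`-weeding operators
for `k < s` makes it stable under the `p`-weeding operators.
-/

open Finset

theorem IsAlgebraic.exists_sum_range_smul_pow_eq_zero {R A : Type*} [CommRing R] [IsDomain R]
    [IsNoetherianRing R] [CommRing A] [Algebra R A] {x : A} (hx : IsAlgebraic R x) (e : ℕ → ℕ) :
    ∃ (n : ℕ) (c : ℕ → R), (∃ i < n, c i ≠ 0) ∧ ∑ i ∈ range n, c i • x ^ e i = 0 := by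
  obtain ⟨y, hy, hint⟩ := hx.exists_integral_multiple
  let M := (Algebra.adjoin R {y • x}).toSubmodule
  have : IsNoetherian R M := isNoetherian_of_fg_of_noetherian _ hint.fg_adjoin_singleton
  let v : ℕ → M := fun i =>
    ⟨(y • x) ^ e i, Subalgebra.pow_mem _ (Algebra.self_mem_adjoin_singleton R _) _⟩
  have hv : ¬ LinearIndependent R v := fun hv => hv.finite_of_isNoetherian.false
  simp only [linearIndependent_iff', not_forall, exists_prop] at hv
  obtain ⟨s, g, hg, i, hi, hgi⟩ := hv
  obtain ⟨n, hsn⟩ := s.exists_nat_subset_range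
  refine ⟨n, fun i => if i ∈ s then g i * y ^ e i else 0, ⟨i, mem_range.mp (hsn hi), ?_⟩, ?_⟩
  · simpa [hi] using And.intro hgi (pow_ne_zero _ hy)
  · have hterm : ∀ i, (if i ∈ s then g i * y ^ e i else 0) • x ^ e i =
        if i ∈ s then g i • (y • x) ^ e i else 0 := by
      intro i
      split_ifs <;> simp [smul_pow, mul_smul]
    simp_rw [hterm, sum_ite_mem, inter_eq_right.mpr hsn]
    simpa [v] using congrArg Subtype.val hg

theorem exists_ore_relation {R A : Type*} [CommRing R] [CommRing A] [Algebra R A] (b : ℕ) {x : A}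
    {n : ℕ} {c : ℕ → R} (hc : ∃ i < n, c i ≠ 0) (h : ∑ i ∈ range n, c i • x ^ b ^ i = 0) :
    ∃ (k : ℕ) (D : R) (d : ℕ) (C : ℕ → R), D ≠ 0 ∧
      D • x ^ b ^ k = ∑ i ∈ range d, C i • ((x ^ b ^ k) ^ b ^ i) ^ b := by
  induction n generalizing x c with
  | zero => simp at hc
  | succ n ih =>
    rw [sum_range_succ'] at h
    by_cases h0 : c 0 = 0
    · obtain ⟨_ | i, hi, hci⟩ := hc
      · exact absurd h0 hci
      obtain ⟨k, D, d, C, hD, hrel⟩ := ih (x := x ^ b) (c := fun i => c (i + 1))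
        ⟨i, by omega, hci⟩ (by simpa [h0, ← pow_mul, ← pow_succ'] using h)
      refine ⟨k + 1, D, d, C, hD, ?_⟩
      simpa [← pow_mul, ← pow_succ'] using hrel
    · refine ⟨0, c 0, n, fun i => -c (i + 1), h0, ?_⟩
      simp only [pow_zero, pow_one, neg_smul, sum_neg_distrib, ← pow_mul, ← pow_succ]
      exact eq_neg_of_add_eq_zero_right (by simpa using h)

namespace PowerSeries

variable {R : Type*} [CommRing R]

noncomputable def weed (b r : ℕ) : R⟦X⟧ →ₗ[R] R⟦X⟧ where
  toFun Q := mk fun n => coeff (b * n + r) Q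
  map_add' _ _ := by ext; simp
  map_smul' _ _ := by ext; simp

@[simp]
theorem coeff_weed (b r n : ℕ) (Q : R⟦X⟧) : coeff n (weed b r Q) = coeff (b * n + r) Q := by
  simp [weed]

theorem weed_one_zero : (weed 1 0 : R⟦X⟧ →ₗ[R] R⟦X⟧) = LinearMap.id := by
  ext; simp

theorem weed_comp_weed (b c r s : ℕ) :
    (weed b r).comp (weed c s) = (weed (c * b) (c * r + s) : R⟦X⟧ →ₗ[R] R⟦X⟧) := by
  ext Q n
  simp only [LinearMap.comp_apply, coeff_weed]
  ring_nf

theorem weed_expand {b : ℕ} (hb : b ≠ 0) (h : R⟦X⟧) : weed b 0 (expand b hb h) = h := by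
  ext; simp

theorem weed_mul_expand {b r : ℕ} (hr : r < b) (g h : R⟦X⟧) :
    weed b r (g * expand b (by omega) h) = weed b r g * h := by
  ext n
  let e : ℕ × ℕ → ℕ × ℕ := fun x => (b * x.1 + r, b * x.2)
  have he : Set.InjOn e (antidiagonal n) := by
    intro x _ y _ hxy
    simp only [e, Prod.mk.injEq] at hxy
    ext <;> nlinarith [hxy.1, hxy.2]
  have himage : (antidiagonal n).image e ⊆ antidiagonal (b * n + r) := by
    intro y hy
    simp only [mem_image, HasAntidiagonal.mem_antidiagonal, e] at hy ⊢
    obtain ⟨x, hx, rfl⟩ := hy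
    rw [← hx]; ring
  -- only the pairs `(b * i + r, b * j)` with `i + j = n` contribute to the left-hand side
  rw [coeff_weed, coeff_mul, coeff_mul, ← sum_subset himage, sum_image he]
  · simp [e]
  · rintro ⟨i, j⟩ hij hnot
    suffices ¬ b ∣ j by rw [coeff_expand_of_not_dvd _ _ _ this, mul_zero]
    rintro ⟨k, rfl⟩
    rw [HasAntidiagonal.mem_antidiagonal] at hij
    have hk : k ≤ n := by
      by_contra! hk
      nlinarith
    obtain ⟨m, rfl⟩ := Nat.exists_eq_add_of_le hk
    refine hnot (mem_image.mpr ⟨(m, k), by simp [add_comm], ?_⟩)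
    simp only [e, Prod.mk.injEq, and_true]
    linarith

theorem exists_weed_coe_eq {b : ℕ} (hb : 0 < b) (r : ℕ) {N : ℕ} {K : Polynomial R}
    (hK : K.natDegree ≤ b * N) :
    ∃ K' : Polynomial R, K'.natDegree ≤ N ∧ weed b r (K : R⟦X⟧) = K' := by
  refine ⟨trunc (N + 1) (weed b r (K : R⟦X⟧)), Nat.le_of_lt_succ (natDegree_trunc_lt _ _), ?_⟩
  ext m
  rw [Polynomial.coeff_coe, coeff_trunc]
  split_ifs with hm
  · rfl
  · rw [coeff_weed, Polynomial.coeff_coe, Polynomial.coeff_eq_zero_of_natDegree_lt]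
    nlinarith

theorem smul_eq_coe_mul (A : Polynomial R) (f : R⟦X⟧) : A • f = (A : R⟦X⟧) * f := by
  rw [Algebra.smul_def, algebraMap_apply', Algebra.algebraMap_self, map_id]
  rfl

def IsWeedStable (b : ℕ) (W : Submodule R R⟦X⟧) : Prop :=
  ∀ r < b, ∀ Q ∈ W, weed b r Q ∈ W

theorem IsWeedStable.map_le {b : ℕ} {W : Submodule R R⟦X⟧} (hW : IsWeedStable b W) {r : ℕ}
    (hr : r < b) : W.map (weed b r) ≤ W :=
  Submodule.map_le_iff_le_comap.mpr fun Q hQ => hW r hr Q hQ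

theorem exists_isWeedStable_of_isWeedStable_pow {b n : ℕ} (hn : 0 < n) {W : Submodule R R⟦X⟧}
    [Module.Finite R W] (hW : IsWeedStable (b ^ n) W) :
    ∃ V : Submodule R R⟦X⟧, Module.Finite R V ∧ W ≤ V ∧ IsWeedStable b V := by
  let G (k : Fin n) (s : Fin (b ^ (k : ℕ))) : Submodule R R⟦X⟧ := W.map (weed (b ^ (k : ℕ)) s)
  have hWV : W ≤ ⨆ k, ⨆ s, G k s := by
    refine le_trans ?_ (le_iSup₂ (f := G) ⟨0, hn⟩ ⟨0, by simp⟩)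
    simp [G, weed_one_zero]
  refine ⟨⨆ k, ⨆ s, G k s, inferInstance, hWV, fun r hr Q hQ => ?_⟩
  suffices (⨆ k, ⨆ s, G k s).map (weed b r) ≤ ⨆ k, ⨆ s, G k s from
    this (Submodule.mem_map_of_mem hQ)
  simp only [Submodule.map_iSup]
  refine iSup₂_le fun k s => ?_
  rw [← Submodule.map_comp, weed_comp_weed, ← pow_succ]
  have hs : b ^ (k : ℕ) * r + s < b ^ ((k : ℕ) + 1) := by
    rw [pow_succ]
    nlinarith [s.isLt]
  obtain hk | hk : (k : ℕ) + 1 < n ∨ (k : ℕ) + 1 = n := by omega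
  · exact le_iSup₂ (f := G) ⟨k + 1, hk⟩ ⟨_, hs⟩
  · rw [hk] at hs ⊢
    exact (hW.map_le hs).trans hWV

def powSpan (b : ℕ) (u : R⟦X⟧) (d N : ℕ) : Submodule R R⟦X⟧ :=
  Submodule.span R (Set.image2 (fun j i => X ^ j * u ^ b ^ i) (Set.Iic N) (Set.Iic d))

instance (b : ℕ) (u : R⟦X⟧) (d N : ℕ) : Module.Finite R (powSpan b u d N) :=
  Module.Finite.span_of_finite R ((Set.finite_Iic N).image2 _ (Set.finite_Iic d))

theorem coe_mul_pow_mem_powSpan {b : ℕ} (u : R⟦X⟧) {d N i : ℕ} {H : Polynomial R}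
    (hH : H.natDegree ≤ N) (hi : i ≤ d) : (H : R⟦X⟧) * u ^ b ^ i ∈ powSpan b u d N := by
  rw [H.as_sum_range' (N + 1) (Nat.lt_succ_of_le hH), ← Polynomial.coeToPowerSeries.ringHom_apply,
    map_sum, sum_mul]
  refine Submodule.sum_mem _ fun j hj => ?_
  rw [Polynomial.coeToPowerSeries.ringHom_apply, Polynomial.coe_monomial, monomial_eq_C_mul_X_pow,
    mul_assoc, ← smul_eq_C_mul]
  exact Submodule.smul_mem _ _ (Submodule.subset_span
    ⟨j, Nat.le_of_lt_succ (mem_range.mp hj), i, hi, rfl⟩)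

section FiniteField

variable {F : Type*} [Field F] [Fintype F]

local notation "q" => Fintype.card F

theorem pow_card_eq_expand (h : F⟦X⟧) : h ^ q = expand q Fintype.card_ne_zero h := by
  obtain ⟨p, _⟩ := CharP.exists F
  obtain ⟨n, hp, hcard⟩ := FiniteField.card F p
  have : ExpChar F p := ExpChar.prime hp
  have hfrob : iterateFrobenius F p n = RingHom.id F := by
    ext a
    rw [iterateFrobenius_def, ← hcard, FiniteField.pow_card, RingHom.id_apply]
  have := MvPowerSeries.map_iterateFrobenius_expand p hp.ne_zero h n
  rw [hfrob, MvPowerSeries.map_id] at this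
  simp_rw [hcard]
  exact this.symm

theorem weed_mul_pow_card {r : ℕ} (hr : r < q) (g h : F⟦X⟧) :
    weed q r (g * h ^ q) = weed q r g * h := by
  rw [pow_card_eq_expand, weed_mul_expand hr]

theorem weed_pow_card (h : F⟦X⟧) : weed q 0 (h ^ q) = h := by
  rw [pow_card_eq_expand, weed_expand]

theorem IsWeedStable.mem_of_pow_card_pow_mem {W : Submodule F F⟦X⟧} (hW : IsWeedStable q W)
    {h : F⟦X⟧} {k : ℕ} (hk : h ^ q ^ k ∈ W) : h ∈ W := by
  induction k generalizing h with
  | zero => simpa using hk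
  | succ k ih =>
    rw [← weed_pow_card h]
    exact hW 0 Fintype.card_pos _ (ih (by rwa [← pow_mul, ← pow_succ']))

theorem weed_coe_mul_pow_pow_card_mem_powSpan (u : F⟦X⟧) {d N i r : ℕ} {K : Polynomial F}
    (hK : K.natDegree ≤ q * N) (hi : i ≤ d) (hr : r < q) :
    weed q r ((K : F⟦X⟧) * (u ^ q ^ i) ^ q) ∈ powSpan q u d N := by
  obtain ⟨K', hK', hKK'⟩ := exists_weed_coe_eq Fintype.card_pos r hK
  rw [weed_mul_pow_card hr, hKK']
  exact coe_mul_pow_mem_powSpan u hK' hi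

variable {u : F⟦X⟧} {D : Polynomial F} {d : ℕ} {C : ℕ → Polynomial F}

theorem weed_mul_X_pow_mul_pow_mem_powSpan
    (h : (D : F⟦X⟧) * u = ∑ i ∈ range d, (C i : F⟦X⟧) * (u ^ q ^ i) ^ q)
    {N j i r : ℕ} (hDN : D.natDegree ≤ N) (hCN : ∀ i < d, (C i).natDegree ≤ N) (hj : j ≤ N)
    (hi : i ≤ d) (hr : r < q) :
    weed q r ((D : F⟦X⟧) ^ (q - 1) * (X ^ j * u ^ q ^ i)) ∈ powSpan q u d N := by
  obtain ⟨m, hm⟩ : ∃ m, q = m + 2 := ⟨q - 2, by have := Fintype.one_lt_card (α := F); omega⟩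
  have hq1 : q - 1 = m + 1 := by omega
  rw [hq1]
  cases i with
  | zero =>
    have hexp : (D : F⟦X⟧) ^ (m + 1) * (X ^ j * u ^ q ^ 0) = ∑ i ∈ range d,
        ((D ^ m * Polynomial.X ^ j * C i : Polynomial F) : F⟦X⟧) * (u ^ q ^ i) ^ q := by
      calc _ = (D : F⟦X⟧) ^ m * X ^ j * ((D : F⟦X⟧) * u) := by ring
        _ = _ := by
          rw [h, mul_sum]
          refine sum_congr rfl fun i _ => ?_
          push_cast
          ring
    rw [hexp, map_sum]
    refine Submodule.sum_mem _ fun i hi => weed_coe_mul_pow_pow_card_mem_powSpan u ?_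
      (mem_range.mp hi).le hr
    have := Polynomial.natDegree_mul_le_of_le (Polynomial.natDegree_mul_le_of_le
      (Polynomial.natDegree_pow_le_of_le m hDN) (Polynomial.natDegree_X_pow_le j))
      (hCN i (mem_range.mp hi))
    rw [hm]
    nlinarith
  | succ i =>
    have hexp : (D : F⟦X⟧) ^ (m + 1) * (X ^ j * u ^ q ^ (i + 1)) =
        ((D ^ (m + 1) * Polynomial.X ^ j : Polynomial F) : F⟦X⟧) * (u ^ q ^ i) ^ q := by
      rw [← pow_mul, ← pow_succ]
      push_cast
      ring
    rw [hexp]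
    refine weed_coe_mul_pow_pow_card_mem_powSpan u ?_ (Nat.le_of_succ_le hi) hr
    have := Polynomial.natDegree_mul_le_of_le (Polynomial.natDegree_pow_le_of_le (m + 1) hDN)
      (Polynomial.natDegree_X_pow_le j)
    rw [hm]
    nlinarith

theorem exists_isWeedStable_card_of_ore (hD : D ≠ 0)
    (h : (D : F⟦X⟧) * u = ∑ i ∈ range d, (C i : F⟦X⟧) * (u ^ q ^ i) ^ q) :
    ∃ W : Submodule F F⟦X⟧, FiniteDimensional F W ∧ u ∈ W ∧ IsWeedStable q W := by
  set N := max D.natDegree ((range d).sup fun i => (C i).natDegree)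
  have hDN : D.natDegree ≤ N := le_max_left _ _
  have hCN : ∀ i < d, (C i).natDegree ≤ N := fun i hi =>
    (le_sup (f := fun i => (C i).natDegree) (mem_range.mpr hi)).trans (le_max_right _ _)
  let mulD := LinearMap.mulLeft F (D : F⟦X⟧)
  have hmulD : Function.Injective mulD :=
    fun _ _ hfg => mul_left_cancel₀ (Polynomial.coe_eq_zero_iff.not.mpr hD) hfg
  refine ⟨(powSpan q u d N).comap mulD, ?_, ?_, fun r hr Q hQ => ?_⟩
  · let restrictD : (powSpan q u d N).comap mulD →ₗ[F] powSpan q u d N :=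
      mulD.restrict fun _ hQ => hQ
    exact Module.Finite.of_injective restrictD
      fun Q Q' hQQ' => Subtype.ext (hmulD (congrArg Subtype.val hQQ'))
  · simpa [mulD] using coe_mul_pow_mem_powSpan (b := q) u hDN (Nat.zero_le d)
  · have hweed : mulD (weed q r Q) = weed q r ((D : F⟦X⟧) ^ (q - 1) * mulD Q) := by
      simp only [mulD, LinearMap.mulLeft_apply]
      rw [← mul_assoc, pow_sub_one_mul Fintype.card_ne_zero, mul_comm _ Q, weed_mul_pow_card hr,
        mul_comm]
    have hspan : powSpan q u d N ≤ (powSpan q u d N).comap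
        ((weed q r).comp (LinearMap.mulLeft F ((D : F⟦X⟧) ^ (q - 1)))) := by
      refine Submodule.span_le.mpr ?_
      rintro _ ⟨j, hj, i, hi, rfl⟩
      exact weed_mul_X_pow_mul_pow_mem_powSpan h hDN hCN hj hi hr
    show mulD (weed q r Q) ∈ powSpan q u d N
    rw [hweed]
    exact hspan hQ

theorem exists_isWeedStable_card_of_isAlgebraic {P : F⟦X⟧} (hP : IsAlgebraic (Polynomial F) P) :
    ∃ W : Submodule F F⟦X⟧, FiniteDimensional F W ∧ P ∈ W ∧ IsWeedStable q W := by
  obtain ⟨n, c, hc, h⟩ := hP.exists_sum_range_smul_pow_eq_zero (q ^ ·)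
  obtain ⟨k, D, d, C, hD, hrel⟩ := exists_ore_relation q hc h
  simp only [smul_eq_coe_mul] at hrel
  obtain ⟨W, hWfin, hW, hWstable⟩ := exists_isWeedStable_card_of_ore hD hrel
  exact ⟨W, hWfin, hWstable.mem_of_pow_card_pow_mem hW, hWstable⟩

end FiniteField

end PowerSeries

open PowerSeries

theorem exists_finiteDimensional_weeding_stable_general (p : ℕ) (F : Type*)
    [Field F] [Fintype F] [CharP F p] (P : PowerSeries F)
    (hP : IsAlgebraic (Polynomial F) P) :
    ∃ V : Submodule F (PowerSeries F), FiniteDimensional F V ∧ P ∈ V ∧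
      ∀ r : ℕ, r < p → ∀ Q ∈ V,
        (PowerSeries.mk fun n => PowerSeries.coeff (p * n + r) Q) ∈ V := by
  obtain ⟨s, -, hcard⟩ := FiniteField.card F p
  obtain ⟨W, _, hPW, hW⟩ := exists_isWeedStable_card_of_isAlgebraic hP
  rw [hcard] at hW
  obtain ⟨V, hV, hWV, hVstable⟩ := exists_isWeedStable_of_isWeedStable_pow s.pos hW
  exact ⟨V, hV, hWV hPW, hVstable⟩

/-- If `P ∈ F⟦X⟧` is algebraic over `F[X]` (`F` a finite field of characteristic `p`),
then there is a finite-dimensional `F`-subspace of `F⟦X⟧` containing `P` and stable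
under all weeding operators `Λ_r`, `0 ≤ r < p`. -/
theorem exists_finiteDimensional_weeding_stable (p : ℕ) [Fact p.Prime] (F : Type*)
    [Field F] [Fintype F] [CharP F p] (P : PowerSeries F)
    (hP : IsAlgebraic (Polynomial F) P) :
    ∃ V : Submodule F (PowerSeries F), FiniteDimensional F V ∧ P ∈ V ∧
      ∀ r : ℕ, r < p → ∀ Q ∈ V,
        (PowerSeries.mk fun n => PowerSeries.coeff (p * n + r) Q) ∈ V :=
  exists_finiteDimensional_weeding_stable_general p F P hP
end
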